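/- arXiv:1808.05026 — 6 statements merged into one kernel-verified Lean document; each statement's English description precedes it below -/
import Mathlib

section
/- Let A be an associative ℂ-algebra containing elements E_0, E_1, …, E_{n-1} satisfying the type B Temperley–Lieb relations. Then for all integers i, j with i > j+1 ≥ 1 (so 2 ≤ i ≤ n-1 and 0 ≤ j ≤ i-2), one has E_{i,0}E^{1,j}E_i = E_{i-2,0}E^{1,j}E_i. -/
/-- `descProd E i j = E i * E (i-1) * ⋯ * E j` (empty product `1` when `j = i + 1`). -/
def descProd {A : Type*} [Monoid A] (E : ℕ → A) (i j : ℕ) : A :=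
  ((List.range (i + 1 - j)).map (fun k => E (i - k))).prod

/-- `ascProd E i j = E i * E (i+1) * ⋯ * E j` (empty product `1` when `j = i - 1`). -/
def ascProd {A : Type*} [Monoid A] (E : ℕ → A) (i j : ℕ) : A :=
  ((List.range (j + 1 - i)).map (fun k => E (i + k))).prod

section Products

variable {A : Type*} [Monoid A] (E : ℕ → A)

theorem descProd_succ {i j : ℕ} (h : j ≤ i + 1) :
    descProd E (i + 1) j = E (i + 1) * descProd E i j := by
  rw [descProd, descProd, show i + 1 + 1 - j = i + 1 - j + 1 by omega, List.range_succ_eq_map,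
    List.map_cons, List.prod_cons, List.map_map]
  simp only [Nat.sub_zero, Function.comp_def, Nat.succ_sub_succ]

theorem commute_descProd {a : A} {i j : ℕ} (h : ∀ k, j ≤ k → k ≤ i → Commute a (E k)) :
    Commute a (descProd E i j) := by
  refine Commute.list_prod_right _ _ fun x hx => ?_
  obtain ⟨k, hk, rfl⟩ := List.mem_map.1 hx
  exact h _ (by have := List.mem_range.1 hk; omega) (Nat.sub_le i k)

theorem commute_ascProd {a : A} {i j : ℕ} (h : ∀ k, i ≤ k → k ≤ j → Commute a (E k)) :
    Commute a (ascProd E i j) := by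
  refine Commute.list_prod_right _ _ fun x hx => ?_
  obtain ⟨k, hk, rfl⟩ := List.mem_map.1 hx
  exact h _ (Nat.le_add_right i k) (by have := List.mem_range.1 hk; omega)

end Products

theorem typeB_lemma_general (n : ℕ) (A : Type*) [Ring A]
    (E : ℕ → A)
    (hcomm : ∀ i j, j + 1 < i → i ≤ n - 1 → E i * E j = E j * E i)
    (hdown : ∀ i, 2 ≤ i → i ≤ n - 1 → E i * E (i - 1) * E i = E i) :
    ∀ i j, j + 1 < i → i ≤ n - 1 →
      descProd E i 0 * ascProd E 1 j * E i = descProd E (i - 2) 0 * ascProd E 1 j * E i := by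
  intro i j hij hin
  obtain ⟨m, rfl⟩ : ∃ m, i = m + 2 := ⟨i - 2, by omega⟩
  set X := descProd E m 0 * ascProd E 1 j
  have hsplit : descProd E (m + 2) 0 = E (m + 2) * E (m + 1) * descProd E m 0 := by
    rw [descProd_succ E (by omega), descProd_succ E (by omega), mul_assoc]
  have hbraid : E (m + 2) * E (m + 1) * E (m + 2) = E (m + 2) := hdown _ (by omega) hin
  -- Everything in `X` is at distance at least 2 from `E (m + 2)`.
  have hX : Commute (E (m + 2)) X :=
    (commute_descProd E fun k _ hk => hcomm _ k (by omega) hin).mul_right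
      (commute_ascProd E fun k _ hk => hcomm _ k (by omega) hin)
  calc descProd E (m + 2) 0 * ascProd E 1 j * E (m + 2)
      = E (m + 2) * E (m + 1) * (X * E (m + 2)) := by rw [hsplit]; simp only [X, mul_assoc]
    _ = E (m + 2) * E (m + 1) * E (m + 2) * X := by rw [← hX.eq]; simp only [mul_assoc]
    _ = X * E (m + 2) := by rw [hbraid, hX.eq]

/-- In any associative ℂ-algebra with elements `E 0, …, E (n-1)` satisfying the type B
Temperley–Lieb relations, for all `i > j + 1 ≥ 1` (with `i ≤ n - 1`) one has
`E_{i,0} E^{1,j} E_i = E_{i-2,0} E^{1,j} E_i`. -/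
theorem typeB_lemma (n : ℕ) (hn : 2 ≤ n) (δ : ℂ) (A : Type*) [Ring A] [Algebra ℂ A]
    (E : ℕ → A)
    (hsq : ∀ i, i ≤ n - 1 → E i * E i = δ • E i)
    (hcomm : ∀ i j, j + 1 < i → i ≤ n - 1 → E i * E j = E j * E i)
    (hup : ∀ i, 1 ≤ i → i + 1 ≤ n - 1 → E i * E (i + 1) * E i = E i)
    (hdown : ∀ i, 2 ≤ i → i ≤ n - 1 → E i * E (i - 1) * E i = E i)
    (hB0 : E 0 * E 1 * E 0 * E 1 = 2 * (E 0 * E 1))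
    (hB1 : E 1 * E 0 * E 1 * E 0 = 2 * (E 1 * E 0)) :
    ∀ i j, j + 1 < i → i ≤ n - 1 →
      descProd E i 0 * ascProd E 1 j * E i = descProd E (i - 2) 0 * ascProd E 1 j * E i :=
  typeB_lemma_general n A E hcomm hdown
end

section
/- Let A be an associative ℂ-algebra containing elements E_0, E_1, …, E_{n-1} satisfying the type D Temperley–Lieb relations. Then for every integer i with 2 ≤ i ≤ n-1, one has E_0E_1E_{i,0} = E_0E_1E_{i,3} (where E_{2,3} = 1 by convention). -/
/-- Type D convention: `E_{i,0} = E i * E (i-1) * ⋯ * E 3 * E 2 * E 0` for `i ≥ 2`,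
and `E_{1,0} = E 0`. -/
def descProdD {A : Type*} [Monoid A] (E : ℕ → A) (i : ℕ) : A :=
  descProd E i 2 * E 0

section Monoid

variable {M : Type*} [Monoid M]

theorem descProd_eq_descProd_succ_mul (E : ℕ → M) {i j : ℕ} (h : j ≤ i) :
    descProd E i j = descProd E i (j + 1) * E j := by
  unfold descProd
  rw [show i + 1 - j = (i - j) + 1 by omega, show i + 1 - (j + 1) = i - j by omega,
    List.range_succ, List.map_append, List.prod_append]
  simp only [List.map_cons, List.map_nil, List.prod_cons, List.prod_nil, mul_one]
  rw [Nat.sub_sub_self h]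

theorem Commute.descProd_right {x : M} {E : ℕ → M} {i j : ℕ}
    (h : ∀ k, j ≤ k → k ≤ i → Commute x (E k)) : Commute x (descProd E i j) := by
  apply Commute.list_prod_right
  intro y hy
  obtain ⟨k, hk, rfl⟩ := List.mem_map.mp hy
  rw [List.mem_range] at hk
  exact h _ (by omega) (by omega)

theorem Commute.mul_mul_mul_eq_mul {a x c : M} (hax : Commute a x) (h : a * c * a = a) :
    a * x * c * a = a * x := by
  rw [hax.eq, mul_assoc x, mul_assoc x, h]

end Monoid

theorem typeD_lemma_c_general (n : ℕ) (A : Type*) [Ring A]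
    (E : ℕ → A)
    (hcomm : ∀ i j, 1 ≤ j → j + 1 < i → i ≤ n - 1 → E i * E j = E j * E i)
    (hcomm0 : ∀ i, i ≤ n - 1 → i ≠ 2 → E i * E 0 = E 0 * E i)
    (h020 : E 0 * E 2 * E 0 = E 0) :
    ∀ i, 2 ≤ i → i ≤ n - 1 →
      E 0 * E 1 * descProdD E i = E 0 * E 1 * descProd E i 3 := by
  intro i hi2 hin
  have h01 : Commute (E 0) (E 1) := (hcomm0 1 (by omega) (by omega)).symm
  have h0D : Commute (E 0) (descProd E i 3) :=
    Commute.descProd_right fun k hk3 hki => (hcomm0 k (by omega) (by omega)).symm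
  have h1D : Commute (E 1) (descProd E i 3) :=
    Commute.descProd_right fun k hk3 hki => (hcomm k 1 le_rfl (by omega) (by omega)).symm
  calc E 0 * E 1 * descProdD E i
      = E 0 * (E 1 * descProd E i 3) * E 2 * E 0 := by
        rw [descProdD, descProd_eq_descProd_succ_mul E hi2]
        simp only [mul_assoc]
    _ = E 0 * E 1 * descProd E i 3 := by
        rw [(h01.mul_right h0D).mul_mul_mul_eq_mul h020, mul_assoc]

/-- Type D Temperley–Lieb relation: `E_0 E_1 E_{i,0} = E_0 E_1 E_{i,3}` for `2 ≤ i ≤ n - 1`. -/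
theorem typeD_lemma_c (n : ℕ) (hn : 4 ≤ n) (δ : ℂ) (A : Type*) [Ring A] [Algebra ℂ A]
    (E : ℕ → A)
    (hsq : ∀ i, i ≤ n - 1 → E i * E i = δ • E i)
    (hcomm : ∀ i j, 1 ≤ j → j + 1 < i → i ≤ n - 1 → E i * E j = E j * E i)
    (hcomm0 : ∀ i, i ≤ n - 1 → i ≠ 2 → E i * E 0 = E 0 * E i)
    (hup : ∀ i, 1 ≤ i → i + 1 ≤ n - 1 → E i * E (i + 1) * E i = E i)
    (hdown : ∀ i, 2 ≤ i → i ≤ n - 1 → E i * E (i - 1) * E i = E i)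
    (h020 : E 0 * E 2 * E 0 = E 0)
    (h202 : E 2 * E 0 * E 2 = E 2) :
    ∀ i, 2 ≤ i → i ≤ n - 1 →
      E 0 * E 1 * descProdD E i = E 0 * E 1 * descProd E i 3 :=
  typeD_lemma_c_general n A E hcomm hcomm0 h020
end

section
/- For every integer n ≥ 2, the number of tuples (p, (i_1,…,i_p), (j_1,…,j_p)) of integers with 0 ≤ p ≤ n-1, 1 ≤ i_1 < i_2 < ⋯ < i_p ≤ n-1, 1 ≤ j_1 < j_2 < ⋯ < j_p ≤ n-1 and j_k ≤ i_k for all 1 ≤ k ≤ p, equals the n-th Catalan number C_n = (1/(n+1))·binom(2n, n). -/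
/-!
Read a word in `U`, `D` as a lattice path whose points record the numbers of `U`- and `D`-steps
taken so far; a Dyck word of semilength `n` is such a path from `(0, 0)` to `(n, n)` that never
has more `D`s than `U`s. Such a path is determined by its valleys (the points where a `D` is
followed by a `U`), since between consecutive valleys it consists of a run of `U`s followed by a
run of `D`s. The valleys `(i₁, j₁), …, (i_p, j_p)` of a Dyck path are strictly increasing in both
coordinates and satisfy `1 ≤ j_k ≤ i_k ≤ n - 1`, and every such tuple arises. So the tuples are
counted by the Catalan number `C_n`, and `(n + 1) C_n = choose (2n) n`.
-/

open List DyckStep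

namespace DyckValleys

def BothLt (p q : ℕ × ℕ) : Prop := p.1 < q.1 ∧ p.2 < q.2

instance : Trans BothLt BothLt BothLt :=
  ⟨fun h₁ h₂ => ⟨h₁.1.trans h₂.1, h₁.2.trans h₂.2⟩⟩

def ofCorners : ℕ × ℕ → List (ℕ × ℕ) → List DyckStep
  | _, [] => []
  | s, p :: c => replicate (p.1 - s.1) U ++ replicate (p.2 - s.2) D ++ ofCorners p c

/-- The valleys of the path `w` started at `s`, followed by its endpoint. -/
def corners : ℕ × ℕ → List DyckStep → List (ℕ × ℕ)
  | s, [] => [s]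
  | s, U :: w => corners (s + (1, 0)) w
  | s, D :: w => (if w.head? = some U then [s + (0, 1)] else []) ++ corners (s + (0, 1)) w

section ofCorners

variable {s e : ℕ × ℕ} {c : List (ℕ × ℕ)}

@[simp] lemma ofCorners_nil (s : ℕ × ℕ) : ofCorners s [] = [] := rfl

lemma ofCorners_cons (s p : ℕ × ℕ) (c : List (ℕ × ℕ)) :
    ofCorners s (p :: c) = replicate (p.1 - s.1) U ++ replicate (p.2 - s.2) D ++ ofCorners p c :=
  rfl

lemma ofCorners_cons_of_fst_lt {p : ℕ × ℕ} (h : s.1 < p.1) :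
    ofCorners s (p :: c) = U :: ofCorners (s + (1, 0)) (p :: c) := by
  rw [ofCorners_cons, ofCorners_cons, show p.1 - s.1 = p.1 - (s + (1, 0)).1 + 1 by simp; omega]
  rfl

lemma ofCorners_cons_of_fst_eq {p : ℕ × ℕ} (h₁ : s.1 = p.1) (h₂ : s.2 < p.2) :
    ofCorners s (p :: c) = D :: ofCorners (s + (0, 1)) (p :: c) := by
  rw [ofCorners_cons, ofCorners_cons, show p.2 - s.2 = p.2 - (s + (0, 1)).2 + 1 by simp; omega]
  simp [h₁, replicate_succ]

lemma add_counts_ofCorners (h : IsChain (· ≤ ·) (s :: (c ++ [e]))) :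
    s + ((ofCorners s (c ++ [e])).count U, (ofCorners s (c ++ [e])).count D) = e := by
  induction c generalizing s with
  | nil =>
    obtain ⟨h₁, h₂⟩ := Prod.le_def.mp (isChain_pair.mp h)
    ext <;> simp [ofCorners_cons, count_replicate] <;> omega
  | cons p c ih =>
    simp only [cons_append, isChain_cons_cons] at h
    obtain ⟨h₁, h₂⟩ := Prod.le_def.mp h.1
    have := ih h.2
    rw [Prod.ext_iff] at this ⊢
    simp [ofCorners_cons, count_replicate] at this ⊢
    omega

lemma count_take_ofCorners (h : IsChain (· ≤ ·) (s :: c)) (hs : s.2 ≤ s.1)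
    (hc : ∀ p ∈ c, p.2 ≤ p.1) (k : ℕ) :
    s.2 + ((ofCorners s c).take k).count D ≤ s.1 + ((ofCorners s c).take k).count U := by
  induction c generalizing s k with
  | nil => simpa using hs
  | cons p c ih =>
    rw [isChain_cons_cons] at h
    obtain ⟨h₁, h₂⟩ := Prod.le_def.mp h.1
    have hp := hc p mem_cons_self
    have ih' := ih h.2 hp (fun q hq => hc q (mem_cons_of_mem p hq)) (k - (p.1 - s.1) - (p.2 - s.2))
    have hrest (a : DyckStep) : ((ofCorners p c).take (k - (p.1 - s.1) - (p.2 - s.2))).count a ≤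
        k - (p.1 - s.1) - (p.2 - s.2) :=
      count_le_length.trans (length_take_le _ _)
    have := hrest U
    have := hrest D
    simp [ofCorners_cons, take_append, take_replicate, count_replicate] at *
    omega

end ofCorners

section corners

variable {s p : ℕ × ℕ} {w : List DyckStep}

@[simp] lemma corners_nil (s : ℕ × ℕ) : corners s [] = [s] := rfl

@[simp] lemma corners_U_cons (s : ℕ × ℕ) (w : List DyckStep) :
    corners s (U :: w) = corners (s + (1, 0)) w := rfl

lemma corners_D_cons (s : ℕ × ℕ) (w : List DyckStep) :
    corners s (D :: w) =
      (if w.head? = some U then [s + (0, 1)] else []) ++ corners (s + (0, 1)) w := rfl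

lemma corners_ne_nil (s : ℕ × ℕ) (w : List DyckStep) : corners s w ≠ [] := by
  induction w generalizing s with
  | nil => simp
  | cons a w ih => cases a <;> simp [corners_D_cons, ih]

lemma corners_replicate_U_append (s : ℕ × ℕ) (x : ℕ) (w : List DyckStep) :
    corners s (replicate x U ++ w) = corners (s + (x, 0)) w := by
  induction x generalizing s with
  | zero => simp [Prod.mk_zero_zero]
  | succ x ih =>
    rw [replicate_succ, cons_append, corners_U_cons, ih, add_assoc]
    congr 2
    ext <;> simp; omega

lemma corners_replicate_D_append (s : ℕ × ℕ) (y : ℕ) (w : List DyckStep) :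
    corners s (replicate (y + 1) D ++ w) =
      (if w.head? = some U then [s + (0, y + 1)] else []) ++ corners (s + (0, y + 1)) w := by
  induction y generalizing s with
  | zero => simp [corners_D_cons]
  | succ y ih =>
    rw [replicate_succ, cons_append, corners_D_cons, ih, add_assoc]
    simp [replicate_succ, Nat.add_comm 1]

lemma mem_corners_le (h : p ∈ corners s w) : s ≤ p := by
  induction w generalizing s with
  | nil => simp_all
  | cons a w ih =>
    cases a
    · exact le_self_add.trans (ih h)
    · rw [corners_D_cons, mem_append] at h
      rcases h with h | h
      · split_ifs at h <;> simp_all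
      · exact le_self_add.trans (ih h)

lemma fst_eq_of_mem_head?_corners (hw : w.head? ≠ some U) (hp : p ∈ (corners s w).head?) :
    p.1 = s.1 := by
  induction w generalizing s with
  | nil => simp_all
  | cons a w ih =>
    cases a
    · simp at hw
    · rw [corners_D_cons] at hp
      split_ifs at hp with hU
      · simp at hp
        simp [← hp]
      · have := ih (s := s + (0, 1)) hU (by simpa using hp)
        simpa using this

lemma ofCorners_corners (s : ℕ × ℕ) (w : List DyckStep) : ofCorners s (corners s w) = w := by
  induction w generalizing s with
  | nil => simp [ofCorners_cons]
  | cons a w ih =>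
    cases a
    · obtain ⟨p, c, hpc⟩ := exists_cons_of_ne_nil (corners_ne_nil (s + (1, 0)) w)
      have hp : s + (1, 0) ≤ p := mem_corners_le (hpc ▸ mem_cons_self)
      rw [corners_U_cons, hpc, ofCorners_cons_of_fst_lt (by simp [Prod.le_def] at hp; omega),
        ← hpc, ih]
    · by_cases hU : w.head? = some U
      · simp [corners_D_cons, hU, ofCorners_cons, ih]
      obtain ⟨p, c, hpc⟩ := exists_cons_of_ne_nil (corners_ne_nil (s + (0, 1)) w)
      have hp : s + (0, 1) ≤ p := mem_corners_le (hpc ▸ mem_cons_self)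
      have hp₁ : p.1 = s.1 := by
        have := fst_eq_of_mem_head?_corners (s := s + (0, 1)) (p := p) hU (by simp [hpc])
        simpa using this
      rw [corners_D_cons, if_neg hU, nil_append, hpc,
        ofCorners_cons_of_fst_eq hp₁.symm (by simp [Prod.le_def] at hp; omega), ← hpc, ih]

lemma corners_ofCorners {c : List (ℕ × ℕ)} (h : IsChain BothLt (s :: c)) (hc : c ≠ []) :
    corners s (ofCorners s c) = c := by
  induction c generalizing s with
  | nil => exact absurd rfl hc
  | cons p c ih =>
    rw [isChain_cons_cons] at h
    obtain ⟨⟨h₁, h₂⟩, h⟩ := h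
    have hp : s + (p.1 - s.1, 0) + (0, p.2 - s.2 - 1 + 1) = p := by
      ext <;> simp <;> omega
    rw [ofCorners_cons, append_assoc, corners_replicate_U_append,
      show p.2 - s.2 = p.2 - s.2 - 1 + 1 by omega, corners_replicate_D_append, hp]
    cases c with
    | nil => simp
    | cons q c =>
      have hU : (ofCorners p (q :: c)).head? = some U := by
        rw [ofCorners_cons_of_fst_lt (isChain_cons_cons.mp h).1.1, head?_cons]
      rw [if_pos hU, ih h (cons_ne_nil _ _), singleton_append]

lemma getLast?_corners (s : ℕ × ℕ) (w : List DyckStep) :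
    (corners s w).getLast? = some (s + (w.count U, w.count D)) := by
  induction w generalizing s with
  | nil => simp
  | cons a w ih =>
    cases a
    · simp [ih, add_assoc, add_comm 1]
    · simp [corners_D_cons, ih, add_assoc, add_comm 1]

lemma exists_take_of_mem_corners (hp : p ∈ corners s w) :
    ∃ k, p = s + ((w.take k).count U, (w.take k).count D) := by
  induction w generalizing s with
  | nil => exact ⟨0, by simpa [Prod.mk_zero_zero] using hp⟩
  | cons a w ih =>
    cases a
    · obtain ⟨k, rfl⟩ := ih (s := s + (1, 0)) hp
      exact ⟨k + 1, by simp [add_assoc, add_comm 1]⟩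
    · rw [corners_D_cons, mem_append] at hp
      rcases hp with hp | hp
      · refine ⟨1, ?_⟩
        split_ifs at hp <;> simp_all
      · obtain ⟨k, rfl⟩ := ih (s := s + (0, 1)) hp
        exact ⟨k + 1, by simp [add_assoc, add_comm 1]⟩

lemma snd_lt_of_mem_corners (hw : w.getLast? = some D) (hp : p ∈ corners s w) : s.2 < p.2 := by
  induction w generalizing s with
  | nil => simp at hw
  | cons a w ih =>
    cases a
    · cases w with
      | nil => simp at hw
      | cons b w => simpa using (ih (s := s + (1, 0)) (by simpa using hw) hp)
    · have : s + (0, 1) ≤ p := by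
        rw [corners_D_cons, mem_append] at hp
        rcases hp with hp | hp
        · split_ifs at hp <;> simp_all
        · exact mem_corners_le hp
      simp [Prod.le_def] at this
      omega

lemma isChain_corners (hw : w.getLast? = some D) : IsChain BothLt (corners s w) := by
  induction w generalizing s with
  | nil => simp at hw
  | cons a w ih =>
    rcases w with _ | ⟨b, w⟩
    · cases a <;> simp_all [corners_D_cons]
    have hw' : (b :: w).getLast? = some D := by simpa using hw
    cases a
    · exact ih hw'
    rw [corners_D_cons]
    split_ifs with hb
    · rw [singleton_append, isChain_cons]
      refine ⟨fun p hp => ⟨?_, snd_lt_of_mem_corners hw' (mem_of_mem_head? hp)⟩, ih hw'⟩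
      obtain rfl : b = U := by simpa using hb
      have := mem_corners_le (s := s + (0, 1) + (1, 0)) (mem_of_mem_head? hp)
      simp [Prod.le_def] at this ⊢
      omega
    · exact ih hw'

end corners

lemma add_length_lt_of_isChain_lt {a b : ℕ} {l : List ℕ} (h : IsChain (· < ·) (a :: l ++ [b])) :
    a + l.length < b := by
  induction l generalizing a with
  | nil => simpa using h
  | cons x l ih =>
    simp only [cons_append, isChain_cons_cons] at h
    have := ih h.2
    simp only [length_cons]
    omega

def standardMonomialIndices (n : ℕ) : Set (List (ℕ × ℕ)) :=
  {l | l.length ≤ n - 1 ∧ l.IsChain (fun p q => p.1 < q.1) ∧ l.IsChain (fun p q => p.2 < q.2) ∧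
    ∀ p ∈ l, 1 ≤ p.2 ∧ p.2 ≤ p.1 ∧ p.1 ≤ n - 1}

lemma mem_standardMonomialIndices_iff {n : ℕ} (hn : 0 < n) {l : List (ℕ × ℕ)} :
    l ∈ standardMonomialIndices n ↔
      IsChain BothLt (0 :: (l ++ [(n, n)])) ∧ ∀ p ∈ l, p.2 ≤ p.1 := by
  rw [isChain_iff_pairwise]
  constructor
  · rintro ⟨-, h₁, h₂, hl⟩
    have h₁' := (isChain_map Prod.fst).mpr h₁
    have h₂' := (isChain_map Prod.snd).mpr h₂
    rw [isChain_iff_pairwise, pairwise_map] at h₁' h₂'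
    refine ⟨pairwise_cons.mpr ⟨fun p hp => ?_, pairwise_append.mpr ⟨h₁'.and h₂', by simp,
      fun p hp q hq => ?_⟩⟩, fun p hp => (hl p hp).2.1⟩
    · rcases mem_append.mp hp with hp | hp
      · have := hl p hp
        exact ⟨by simp; omega, by simp; omega⟩
      · simp_all [BothLt]
    · obtain rfl := mem_singleton.mp hq
      have := hl p hp
      exact ⟨by omega, by omega⟩
  · rintro ⟨h, hle⟩
    have hfst : IsChain (· < ·) (0 :: (l.map Prod.fst ++ [n])) := by
      simpa using (isChain_map Prod.fst).mpr (h.imp fun h => h.1).isChain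
    rw [pairwise_cons, pairwise_append] at h
    obtain ⟨h₀, hl, -, hn'⟩ := h
    have hlen := add_length_lt_of_isChain_lt hfst
    refine ⟨by simp at hlen; omega, (hl.imp And.left).isChain, (hl.imp And.right).isChain,
      fun p hp => ?_⟩
    have h0 := h₀ p (mem_append_left _ hp)
    have h1 := hn' p hp (n, n) (mem_singleton_self _)
    simp only [BothLt] at h0 h1
    exact ⟨h0.2, hle p hp, by omega⟩

lemma snd_le_fst_of_mem_corners (w : DyckWord) {p : ℕ × ℕ} (hp : p ∈ corners 0 w.toList) :
    p.2 ≤ p.1 := by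
  obtain ⟨k, rfl⟩ := exists_take_of_mem_corners hp
  simpa using w.count_D_le_count_U k

lemma corners_eq_dropLast_append (w : DyckWord) :
    corners 0 w.toList = (corners 0 w.toList).dropLast ++ [(w.semilength, w.semilength)] := by
  refine (dropLast_append_getLast? _ ?_).symm
  rw [getLast?_corners, zero_add, ← w.count_U_eq_count_D]
  rfl

lemma dropLast_corners_mem {n : ℕ} (hn : 0 < n) (w : DyckWord) (hw : w.semilength = n) :
    (corners 0 w.toList).dropLast ∈ standardMonomialIndices n := by
  have hne : w.toList ≠ [] := by
    rintro h
    simp [DyckWord.semilength, h] at hw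
    omega
  have hD : w.toList.getLast? = some D := by
    rw [getLast?_eq_some_getLast hne, w.getLast_eq_D]
  refine (mem_standardMonomialIndices_iff hn).mpr ⟨?_, fun p hp =>
    snd_le_fst_of_mem_corners w (dropLast_subset _ hp)⟩
  rw [← hw, ← corners_eq_dropLast_append, isChain_cons]
  refine ⟨fun p hp => ?_, isChain_corners hD⟩
  have h₂ := snd_lt_of_mem_corners hD (mem_of_mem_head? hp)
  have h₁ := snd_le_fst_of_mem_corners w (mem_of_mem_head? hp)
  exact ⟨by simp at h₂ ⊢; omega, h₂⟩

section

variable {n : ℕ} (hn : 0 < n) {l : List (ℕ × ℕ)} (hl : l ∈ standardMonomialIndices n)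
include hn hl

lemma counts_ofCorners_of_mem :
    ((ofCorners 0 (l ++ [(n, n)])).count U, (ofCorners 0 (l ++ [(n, n)])).count D) = (n, n) := by
  simpa using add_counts_ofCorners
    (((mem_standardMonomialIndices_iff hn).mp hl).1.imp fun _ _ h => Prod.le_def.mpr ⟨h.1.le, h.2.le⟩)

lemma count_take_ofCorners_of_mem (k : ℕ) :
    ((ofCorners 0 (l ++ [(n, n)])).take k).count D ≤ ((ofCorners 0 (l ++ [(n, n)])).take k).count U := by
  obtain ⟨hc, hle⟩ := (mem_standardMonomialIndices_iff hn).mp hl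
  simpa using count_take_ofCorners (hc.imp fun _ _ h => Prod.le_def.mpr ⟨h.1.le, h.2.le⟩) le_rfl
    (forall_mem_append.mpr ⟨hle, by simp⟩) k

end

def equivDyckWord {n : ℕ} (hn : 0 < n) :
    standardMonomialIndices n ≃ {w : DyckWord // w.semilength = n} where
  toFun l :=
    have h := Prod.mk.inj (counts_ofCorners_of_mem hn l.2)
    ⟨⟨ofCorners 0 (l.1 ++ [(n, n)]), h.1.trans h.2.symm, count_take_ofCorners_of_mem hn l.2⟩, h.1⟩
  invFun w := ⟨(corners 0 w.1.toList).dropLast, dropLast_corners_mem hn w.1 w.2⟩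
  left_inv l := Subtype.ext <| by
    change (corners 0 (ofCorners 0 (l.1 ++ [(n, n)]))).dropLast = l.1
    rw [corners_ofCorners ((mem_standardMonomialIndices_iff hn).mp l.2).1 (by simp),
      dropLast_concat]
  right_inv w := Subtype.ext <| DyckWord.ext <| by
    change ofCorners 0 ((corners 0 w.1.toList).dropLast ++ [(n, n)]) = w.1.toList
    have h := corners_eq_dropLast_append w.1
    rw [w.2] at h
    rw [← h, ofCorners_corners]

lemma ncard_standardMonomialIndices (n : ℕ) : (standardMonomialIndices n).ncard = catalan n := by
  rcases Nat.eq_zero_or_pos n with rfl | hn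
  · rw [catalan_zero, Set.ncard_eq_one]
    exact ⟨[], by ext l; simp +contextual [standardMonomialIndices]⟩
  rw [← Nat.card_coe_set_eq, Nat.card_congr (equivDyckWord hn), Nat.card_eq_fintype_card,
    DyckWord.card_dyckWord_semilength_eq_catalan]

end DyckValleys

theorem count_typeA_standard_monomials_general (n : ℕ) :
    (n + 1) * ({l : List (ℕ × ℕ) | l.length ≤ n - 1 ∧
        l.Chain' (fun p q => p.1 < q.1) ∧
        l.Chain' (fun p q => p.2 < q.2) ∧
        ∀ p ∈ l, 1 ≤ p.2 ∧ p.2 ≤ p.1 ∧ p.1 ≤ n - 1}).ncard = (2 * n).choose n := by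
  rw [← Nat.centralBinom_eq_two_mul_choose, ← succ_mul_catalan_eq_centralBinom,
    ← DyckValleys.ncard_standardMonomialIndices]
  rfl

/-- The number of tuples `(p, (i₁,…,i_p), (j₁,…,j_p))`, encoded as lists
`[(i₁,j₁), …, (i_p,j_p)]`, with `0 ≤ p ≤ n-1`, `1 ≤ i₁ < ⋯ < i_p ≤ n-1`,
`1 ≤ j₁ < ⋯ < j_p ≤ n-1` and `j_k ≤ i_k` for all `k`, equals the `n`-th Catalan
number `C_n = (1/(n+1)) * choose (2n) n`. -/
theorem count_typeA_standard_monomials (n : ℕ) (hn : 2 ≤ n) :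
    (n + 1) * ({l : List (ℕ × ℕ) | l.length ≤ n - 1 ∧
        l.Chain' (fun p q => p.1 < q.1) ∧
        l.Chain' (fun p q => p.2 < q.2) ∧
        ∀ p ∈ l, 1 ≤ p.2 ∧ p.2 ≤ p.1 ∧ p.1 ≤ n - 1}).ncard = (2 * n).choose n :=
  count_typeA_standard_monomials_general n
end

section
/- For every integer n ≥ 2, one has 2·∑_{ℓ=1}^{n-1} (ℓ+2)·binom(2n-ℓ-1, n)·2^{ℓ-1} = (n-1)·binom(2n, n). Equivalently, ∑_{ℓ=1}^{n-1} ((ℓ+2)/(n+1))·binom(2n-ℓ-1, n)·2^{ℓ-1} = ((n-1)/2)·C_n, where C_n = (1/(n+1))·binom(2n, n) is the n-th Catalan number. -/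
/-!
Put `R m = (2n+2) 2^m binom(2n-m-1, n+1)`. Pascal's rule together with
`(n+1) binom(K, n+1) = (K-n) binom(K, n)` gives `R m = 2 a_{m+1} + R (m+1)`, where `a_ℓ` is the
`ℓ`-th summand, so the sum telescopes to `R 0 - R (n-1)`. Here `R (n-1) = 0`, and the same two
identities give `R 0 = (n-1) binom(2n, n)`.
-/

open Finset

theorem Finset.sum_Icc_one_add_eq_of_eq_add {M : Type*} [AddCommMonoid M] {f g : ℕ → M} {N : ℕ}
    (h : ∀ m < N, f m = g (m + 1) + f (m + 1)) :
    ∀ m ≤ N, ∑ ℓ ∈ Icc 1 m, g ℓ + f m = f 0 := by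
  intro m
  induction m with
  | zero => simp
  | succ m ih =>
    intro hm
    rw [sum_Icc_succ_top (by omega), add_assoc, ← h m (by omega), ih (by omega)]

/-- The remainder `R m` of the telescoping sum. -/
def typeBRemainder (n m : ℕ) : ℕ := (2 * n + 2) * 2 ^ m * (2 * n - m - 1).choose (n + 1)

theorem typeBRemainder_zero (n : ℕ) : typeBRemainder n 0 = (n - 1) * (2 * n).choose n := by
  unfold typeBRemainder
  rcases n with _ | k
  · simp
  have hdown : (2 * k + 1).choose (k + 2) * (k + 2) = (2 * k + 1).choose (k + 1) * k := by
    rw [Nat.choose_succ_right_eq]; congr 1; omega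
  have hcentral : (2 * k + 2).choose (k + 1) = 2 * (2 * k + 1).choose (k + 1) := by
    rw [Nat.choose_succ_succ, Nat.choose_symm_half]; ring
  rw [show 2 * (k + 1) - 0 - 1 = 2 * k + 1 by omega, show 2 * (k + 1) = 2 * k + 2 by ring,
    hcentral]
  calc (2 * k + 2 + 2) * 2 ^ 0 * (2 * k + 1).choose (k + 1 + 1)
      = 2 * ((2 * k + 1).choose (k + 2) * (k + 2)) := by ring
    _ = (k + 1 - 1) * (2 * (2 * k + 1).choose (k + 1)) := by rw [hdown, Nat.add_sub_cancel]; ring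

theorem typeBRemainder_pred (n : ℕ) : typeBRemainder n (n - 1) = 0 := by
  unfold typeBRemainder
  rw [Nat.choose_eq_zero_of_lt (by omega), mul_zero]

theorem typeBRemainder_eq_add {n m : ℕ} (hm : m < n - 1) :
    typeBRemainder n m
      = 2 * ((m + 1 + 2) * (2 * n - (m + 1) - 1).choose n * 2 ^ (m + 1 - 1))
        + typeBRemainder n (m + 1) := by
  unfold typeBRemainder
  obtain ⟨d, rfl⟩ : ∃ d, n = m + 2 + d := ⟨n - m - 2, by omega⟩
  set n := m + 2 + d
  rw [show 2 * n - m - 1 = n + d + 1 by omega, show 2 * n - (m + 1) - 1 = n + d by omega,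
    Nat.add_sub_cancel, Nat.choose_succ_succ]
  have hdown : (n + d).choose (n + 1) * (n + 1) = (n + d).choose n * d := by
    rw [Nat.choose_succ_right_eq, Nat.add_sub_cancel_left]
  -- `n + 1 = (m + 3) + d`, and the `d`-part is absorbed by `hdown`
  calc (2 * n + 2) * 2 ^ m * ((n + d).choose n + (n + d).choose (n + 1))
      = 2 * 2 ^ m * ((m + 3) * (n + d).choose n + (n + d).choose n * d
          + (n + d).choose (n + 1) * (n + 1)) := by ring
    _ = 2 * ((m + 1 + 2) * (n + d).choose n * 2 ^ m)
          + (2 * n + 2) * 2 ^ (m + 1) * (n + d).choose (n + 1) := by rw [← hdown]; ring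

theorem typeB_count_identity_general (n : ℕ) :
    2 * ∑ ℓ ∈ Finset.Icc 1 (n - 1), (ℓ + 2) * (2 * n - ℓ - 1).choose n * 2 ^ (ℓ - 1)
      = (n - 1) * (2 * n).choose n := by
  have htelescope := sum_Icc_one_add_eq_of_eq_add (f := typeBRemainder n)
    (g := fun ℓ => 2 * ((ℓ + 2) * (2 * n - ℓ - 1).choose n * 2 ^ (ℓ - 1)))
    (fun m hm => typeBRemainder_eq_add hm) (n - 1) le_rfl
  rwa [typeBRemainder_pred, add_zero, typeBRemainder_zero, ← mul_sum] at htelescope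

/-- For every `n ≥ 2`,
`2 * ∑_{ℓ=1}^{n-1} (ℓ+2) * choose (2n-ℓ-1) n * 2^(ℓ-1) = (n-1) * choose (2n) n`,
i.e. `∑_{ℓ=1}^{n-1} ((ℓ+2)/(n+1)) * choose (2n-ℓ-1) n * 2^(ℓ-1) = ((n-1)/2) * C_n`. -/
theorem typeB_count_identity (n : ℕ) (hn : 2 ≤ n) :
    2 * ∑ ℓ ∈ Finset.Icc 1 (n - 1), (ℓ + 2) * (2 * n - ℓ - 1).choose n * 2 ^ (ℓ - 1)
      = (n - 1) * (2 * n).choose n :=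
  typeB_count_identity_general n
end

section
/- For every integer n ≥ 2, the number of tuples (p, (i_1,…,i_p), (j_1,…,j_p)) of integers with 0 ≤ p ≤ n-1, 1 ≤ i_1 < i_2 < ⋯ < i_p ≤ n-1, 0 ≤ j_1 ≤ j_2 ≤ ⋯ ≤ j_p ≤ n-1, j_k ≤ i_k for all k, and such that for each 1 ≤ k < p, j_k > 0 implies j_k < j_{k+1}, equals ((n+1)/2)·C_n = (1/2)·binom(2n, n), where C_n is the n-th Catalan number. Equivalently, twice this number equals (n+1)·C_n. -/
namespace TLB

abbrev Step := Bool × Bool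

def cA (w : List Step) : ℕ := w.countP (fun c => c.1)
def cB (w : List Step) : ℕ := w.countP (fun c => c.2)

def Ok (w : List Step) : Prop := ∀ k, cB (w.drop k) ≤ cA (w.drop k)

lemma ok_nil : Ok [] := fun k => by simp [cA, cB]

lemma cA_cons (c : Step) (w : List Step) :
    cA (c :: w) = cA w + if c.1 then 1 else 0 := List.countP_cons

lemma cB_cons (c : Step) (w : List Step) :
    cB (c :: w) = cB w + if c.2 then 1 else 0 := List.countP_cons

lemma ok_cons {c : Step} {w : List Step} :
    Ok (c :: w) ↔ Ok w ∧ cB (c :: w) ≤ cA (c :: w) := by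
  constructor
  · intro h
    exact ⟨fun k => by simpa [List.drop_succ_cons] using h (k + 1), h 0⟩
  · rintro ⟨h1, h2⟩ k
    cases k with
    | zero => exact h2
    | succ k => simpa [List.drop_succ_cons] using h1 k

lemma ok_head {w : List Step} (h : Ok w) : cB w ≤ cA w := h 0

/-- positions (starting at `x`) where the step satisfies `p` -/
def pos (p : Step → Bool) : ℕ → List Step → List ℕ
  | _, [] => []
  | x, c :: w => (if p c then [x] else []) ++ pos p (x + 1) w

lemma length_pos (p : Step → Bool) : ∀ (w : List Step) (x : ℕ),
    (pos p x w).length = w.countP p := by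
  intro w
  induction w with
  | nil => intro x; simp [pos]
  | cons c w ih =>
    intro x
    simp only [pos, List.length_append, ih, List.countP_cons]
    by_cases h : p c <;> simp [h, Nat.add_comm]

lemma mem_pos (p : Step → Bool) : ∀ (w : List Step) (x a : ℕ),
    a ∈ pos p x w ↔ ∃ k, ∃ _ : k < w.length, a = x + k ∧ p w[k] = true := by
  intro w
  induction w with
  | nil => intro x a; simp [pos]
  | cons c w ih =>
    intro x a
    simp only [pos, List.mem_append, ih]
    constructor
    · rintro (h | ⟨k, hk, rfl, hp⟩)
      · by_cases hc : p c
        · simp [hc] at h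
          exact ⟨0, by simp, by omega, by simpa [h] using hc⟩
        · simp [hc] at h
      · exact ⟨k + 1, by simp; omega, by omega, by simpa using hp⟩
    · rintro ⟨k, hk, rfl, hp⟩
      cases k with
      | zero => left; simp at hp ⊢; simp [hp]
      | succ k =>
        right
        exact ⟨k, by simp at hk; omega, by omega, by simpa using hp⟩

lemma mem_pos_bounds {p : Step → Bool} {w : List Step} {x a : ℕ}
    (h : a ∈ pos p x w) : x ≤ a ∧ a < x + w.length := by
  rw [mem_pos] at h
  obtain ⟨k, hk, rfl, -⟩ := h
  omega

lemma pairwise_pos (p : Step → Bool) : ∀ (w : List Step) (x : ℕ),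
    (pos p x w).Pairwise (· < ·) := by
  intro w
  induction w with
  | nil => intro x; simp [pos]
  | cons c w ih =>
    intro x
    simp only [pos]
    rw [List.pairwise_append]
    refine ⟨?_, ih (x + 1), ?_⟩
    · by_cases hc : p c <;> simp [hc]
    · intro a ha b hb
      have hb' := (mem_pos_bounds hb).1
      by_cases hc : p c <;> simp [hc] at ha
      omega

lemma countP_pos (p : Step → Bool) : ∀ (w : List Step) (x k : ℕ),
    (pos p x w).countP (fun a => decide (x + k ≤ a)) = (w.drop k).countP p := by
  intro w
  induction w with
  | nil => intro x k; simp [pos]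
  | cons c w ih =>
    intro x k
    simp only [pos, List.countP_append]
    cases k with
    | zero =>
      have htail : (pos p (x + 1) w).countP (fun a => decide (x + 0 ≤ a))
          = (pos p (x + 1) w).countP (fun a => decide (x + 1 + 0 ≤ a)) := by
        apply List.countP_congr
        intro a ha
        have := (mem_pos_bounds ha).1
        simp; omega
      rw [htail, ih (x + 1) 0]
      simp only [List.drop_zero, List.countP_cons]
      by_cases hc : p c <;> simp [hc, Nat.add_comm]
    | succ k =>
      have hhead : (if p c then [x] else []).countP (fun a => decide (x + (k + 1) ≤ a)) = 0 := by
        by_cases hc : p c <;> simp [hc]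
      have htail : (pos p (x + 1) w).countP (fun a => decide (x + (k + 1) ≤ a))
          = (pos p (x + 1) w).countP (fun a => decide (x + 1 + k ≤ a)) := by
        apply List.countP_congr; intro a ha; simp; omega
      rw [hhead, htail, ih (x + 1) k]
      simp [List.drop_succ_cons]


lemma countP_ge_of_sorted {u : List ℕ} (hu : u.Pairwise (· ≤ ·)) {i : ℕ} (h : i < u.length) :
    u.length - i ≤ u.countP (fun y => decide (u[i] ≤ y)) := by
  have hsplit : u.countP (fun y => decide (u[i] ≤ y))
      = (u.take i).countP (fun y => decide (u[i] ≤ y))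
        + (u.drop i).countP (fun y => decide (u[i] ≤ y)) := by
    have := List.countP_append (p := fun y => decide (u[i] ≤ y)) (l₁ := u.take i) (l₂ := u.drop i)
    rw [List.take_append_drop] at this
    exact this
  have hdrop : (u.drop i).countP (fun y => decide (u[i] ≤ y)) = (u.drop i).length := by
    rw [List.countP_eq_length]
    intro a ha
    rw [List.mem_iff_getElem] at ha
    obtain ⟨j, hj, rfl⟩ := ha
    have hij : i + j < u.length := by simp [List.length_drop] at hj; omega
    have : (u.drop i)[j] = u[i + j] := List.getElem_drop
    rw [this]
    simp only [decide_eq_true_eq]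
    rcases Nat.eq_zero_or_pos j with rfl | hjpos
    · simp
    · exact List.pairwise_iff_getElem.mp hu i (i + j) h hij (by omega)
  rw [hsplit, hdrop]
  simp [List.length_drop]

lemma le_getElem_of_countP {u : List ℕ} (hu : u.Pairwise (· ≤ ·)) {i : ℕ} (h : i < u.length)
    {x : ℕ} (hc : u.length - i ≤ u.countP (fun y => decide (x ≤ y))) : x ≤ u[i] := by
  by_contra hlt
  push_neg at hlt
  have hsplit : u.countP (fun y => decide (x ≤ y))
      = (u.take (i+1)).countP (fun y => decide (x ≤ y))
        + (u.drop (i+1)).countP (fun y => decide (x ≤ y)) := by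
    have := List.countP_append (p := fun y => decide (x ≤ y)) (l₁ := u.take (i+1)) (l₂ := u.drop (i+1))
    rw [List.take_append_drop] at this
    exact this
  have htake : (u.take (i+1)).countP (fun y => decide (x ≤ y)) = 0 := by
    rw [List.countP_eq_zero]
    intro a ha
    rw [List.mem_iff_getElem] at ha
    obtain ⟨j, hj, rfl⟩ := ha
    have hj' : j < i + 1 := by simp [List.length_take] at hj; omega
    have hjlen : j < u.length := by omega
    have : (u.take (i+1))[j] = u[j] := List.getElem_take
    rw [this]
    simp only [decide_eq_true_eq, not_le]
    rcases Nat.lt_or_ge j i with hji | hji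
    · exact lt_of_le_of_lt (List.pairwise_iff_getElem.mp hu j i hjlen h hji) hlt
    · have : j = i := by omega
      subst this; exact hlt
  have hdrop : (u.drop (i+1)).countP (fun y => decide (x ≤ y)) ≤ u.length - (i+1) := by
    calc (u.drop (i+1)).countP _ ≤ (u.drop (i+1)).length := List.countP_le_length
    _ = u.length - (i+1) := by simp [List.length_drop]
  omega

lemma sorted_split : ∀ (jl : List ℕ), jl.Pairwise (· ≤ ·) →
    jl = List.replicate (jl.countP (fun j => decide (j = 0))) 0
      ++ jl.filter (fun j => decide (0 < j)) := by
  intro jl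
  induction jl with
  | nil => simp
  | cons a t ih =>
    intro hp
    rw [List.pairwise_cons] at hp
    rcases Nat.eq_zero_or_pos a with rfl | hpos
    · have : (0 :: t).countP (fun j => decide (j = 0))
          = t.countP (fun j => decide (j = 0)) + 1 := by simp [List.countP_cons]
      rw [this, List.replicate_succ]
      have hfil : (0 :: t).filter (fun j => decide (0 < j)) = t.filter (fun j => decide (0 < j)) := by
        simp
      rw [hfil]
      simpa using ih hp.2
    · have hallpos : ∀ b ∈ a :: t, 0 < b := by
        intro b hb
        rcases List.mem_cons.mp hb with rfl | hb
        · exact hpos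
        · exact lt_of_lt_of_le hpos (hp.1 b hb)
      have hcount : (a :: t).countP (fun j => decide (j = 0)) = 0 := by
        rw [List.countP_eq_zero]
        intro b hb
        have := hallpos b hb
        simp; omega
      have hfil : (a :: t).filter (fun j => decide (0 < j)) = a :: t := by
        rw [List.filter_eq_self]
        intro b hb
        simpa using hallpos b hb
      rw [hcount, hfil]
      simp

lemma chain'_and {α : Type*} {R S : α → α → Prop} :
    ∀ {l : List α}, l.Chain' R → l.Chain' S → l.Chain' (fun a b => R a b ∧ S a b) := by
  intro l
  induction l with
  | nil => intros; exact List.isChain_nil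
  | cons a t ih =>
    cases t with
    | nil => intros; exact List.isChain_singleton _
    | cons b t' =>
      intro hR hS
      rw [List.Chain', List.isChain_cons_cons] at hR hS ⊢
      exact ⟨⟨hR.1, hS.1⟩, ih hR.2 hS.2⟩

lemma zip_fst_snd {α β : Type*} : ∀ (l : List (α × β)),
    (l.map Prod.fst).zip (l.map Prod.snd) = l := by
  intro l
  induction l with
  | nil => simp
  | cons a t ih => simp [ih]

def walks : ℕ → ℕ → Finset (List Step)
  | 0, 0 => {([] : List Step)}
  | 0, _ + 1 => ∅
  | m + 1, h =>
      ((walks m (h + 1)).image (List.cons (false, true))) ∪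
      ((walks m h).image (List.cons (false, false))) ∪
      ((walks m h).image (List.cons (true, true))) ∪
      (match h with
       | 0 => ∅
       | h' + 1 => (walks m h').image (List.cons (true, false)))

lemma mem_walks : ∀ (m h : ℕ) (w : List Step),
    w ∈ walks m h ↔ (w.length = m ∧ cB w + h = cA w ∧ Ok w) := by
  intro m
  induction m with
  | zero =>
    intro h w
    cases h with
    | zero =>
      simp only [walks, Finset.mem_singleton]
      constructor
      · rintro rfl; exact ⟨rfl, by simp [cA, cB], ok_nil⟩
      · rintro ⟨hl, -, -⟩; exact List.length_eq_zero_iff.mp hl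
    | succ h =>
      simp only [walks, Finset.notMem_empty, false_iff]
      rintro ⟨hl, hc, -⟩
      have : w = [] := List.length_eq_zero_iff.mp hl
      subst this
      simp [cA, cB] at hc
  | succ m ih =>
    intro h w
    constructor
    · intro hw
      simp only [walks, Finset.mem_union, Finset.mem_image] at hw
      have main : ∀ (c : Step) (w' : List Step) (h' : ℕ), w' ∈ walks m h' →
          cB (c :: w') + h = cA (c :: w') + h' - (cB w' + h') + (cB w' + h') - cA w' →
          True := fun _ _ _ _ _ => trivial
      rcases hw with ((⟨w', hw', rfl⟩ | ⟨w', hw', rfl⟩) | ⟨w', hw', rfl⟩) | hlast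
      · obtain ⟨hl, hc, hok⟩ := ih (h + 1) w' |>.mp hw'
        refine ⟨by simp [hl], ?_, ?_⟩
        · simp [cB_cons, cA_cons]; omega
        · rw [ok_cons]
          exact ⟨hok, by simp [cB_cons, cA_cons]; omega⟩
      · obtain ⟨hl, hc, hok⟩ := ih h w' |>.mp hw'
        refine ⟨by simp [hl], ?_, ?_⟩
        · simp [cB_cons, cA_cons]; omega
        · rw [ok_cons]
          exact ⟨hok, by simp [cB_cons, cA_cons]; omega⟩
      · obtain ⟨hl, hc, hok⟩ := ih h w' |>.mp hw'
        refine ⟨by simp [hl], ?_, ?_⟩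
        · simp [cB_cons, cA_cons]; omega
        · rw [ok_cons]
          exact ⟨hok, by simp [cB_cons, cA_cons]; omega⟩
      · cases h with
        | zero => simp at hlast
        | succ h' =>
          simp only [Finset.mem_image] at hlast
          obtain ⟨w', hw', rfl⟩ := hlast
          obtain ⟨hl, hc, hok⟩ := ih h' w' |>.mp hw'
          have hBA := ok_head hok
          refine ⟨by simp [hl], ?_, ?_⟩
          · simp [cB_cons, cA_cons]; omega
          · rw [ok_cons]
            exact ⟨hok, by simp [cB_cons, cA_cons]; omega⟩
    · rintro ⟨hl, hc, hok⟩
      cases w with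
      | nil => simp at hl
      | cons c w' =>
        have hl' : w'.length = m := by simpa using hl
        obtain ⟨hok', hBA'⟩ := ok_cons.mp hok
        have hBA'' := ok_head hok'
        simp only [walks, Finset.mem_union, Finset.mem_image]
        obtain ⟨b1, b2⟩ := c
        cases b1 <;> cases b2
        · -- (false, false)
          left; left; right
          refine ⟨w', ih h w' |>.mpr ⟨hl', ?_, hok'⟩, rfl⟩
          simp [cB_cons, cA_cons] at hc; omega
        · -- (false, true)
          left; left; left
          refine ⟨w', ih (h + 1) w' |>.mpr ⟨hl', ?_, hok'⟩, rfl⟩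
          simp [cB_cons, cA_cons] at hc; omega
        · -- (true, false)
          right
          cases h with
          | zero =>
            exfalso
            simp [cB_cons, cA_cons] at hc
            omega
          | succ h' =>
            simp only [Finset.mem_image]
            refine ⟨w', ih h' w' |>.mpr ⟨hl', ?_, hok'⟩, rfl⟩
            simp [cB_cons, cA_cons] at hc; omega
        · -- (true, true)
          left; right
          refine ⟨w', ih h w' |>.mpr ⟨hl', ?_, hok'⟩, rfl⟩
          simp [cB_cons, cA_cons] at hc; omega

lemma disj_cons_image {c d : Step} (hcd : c ≠ d) (s t : Finset (List Step)) :
    Disjoint (s.image (List.cons c)) (t.image (List.cons d)) := by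
  rw [Finset.disjoint_left]
  rintro w hw hw'
  simp only [Finset.mem_image] at hw hw'
  obtain ⟨a, -, rfl⟩ := hw
  obtain ⟨b, -, hb⟩ := hw'
  exact hcd (by injection hb with h1 h2; exact h1.symm)

lemma card_cons_image (c : Step) (s : Finset (List Step)) :
    (s.image (List.cons c)).card = s.card :=
  Finset.card_image_of_injective _ (fun a b hab => by injection hab)

lemma card_walks_succ_zero (m : ℕ) :
    (walks (m + 1) 0).card = (walks m 1).card + 2 * (walks m 0).card := by
  show ((((walks m 1).image (List.cons (false, true))) ∪
      ((walks m 0).image (List.cons (false, false))) ∪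
      ((walks m 0).image (List.cons (true, true))) ∪ ∅)).card = _
  rw [Finset.union_empty]
  rw [Finset.card_union_of_disjoint, Finset.card_union_of_disjoint]
  · simp [card_cons_image]; ring
  · exact disj_cons_image (by simp) _ _
  · rw [Finset.disjoint_union_left]
    exact ⟨disj_cons_image (by simp) _ _, disj_cons_image (by simp) _ _⟩

lemma card_walks_succ_succ (m h : ℕ) :
    (walks (m + 1) (h + 1)).card =
      (walks m (h + 2)).card + 2 * (walks m (h + 1)).card + (walks m h).card := by
  show ((((walks m (h + 2)).image (List.cons (false, true))) ∪
      ((walks m (h + 1)).image (List.cons (false, false))) ∪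
      ((walks m (h + 1)).image (List.cons (true, true))) ∪
      ((walks m h).image (List.cons (true, false))))).card = _
  rw [Finset.card_union_of_disjoint, Finset.card_union_of_disjoint, Finset.card_union_of_disjoint]
  · simp [card_cons_image]; ring
  · exact disj_cons_image (by simp) _ _
  · rw [Finset.disjoint_union_left]
    exact ⟨disj_cons_image (by simp) _ _, disj_cons_image (by simp) _ _⟩
  · rw [Finset.disjoint_union_left, Finset.disjoint_union_left]
    exact ⟨⟨disj_cons_image (by simp) _ _, disj_cons_image (by simp) _ _⟩,
      disj_cons_image (by simp) _ _⟩

lemma choose_plus2 (N K : ℕ) :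
    (N + 2).choose (K + 2) = N.choose K + 2 * N.choose (K + 1) + N.choose (K + 2) := by
  rw [show N + 2 = (N + 1) + 1 from rfl, show K + 2 = (K + 1) + 1 from rfl,
    Nat.choose_succ_succ (N + 1) (K + 1), Nat.choose_succ_succ N K,
    Nat.choose_succ_succ N (K + 1)]
  ring

lemma card_walks_eq : ∀ m h : ℕ,
    (walks m h).card + (2 * m + 1).choose (m + h + 2) = (2 * m + 1).choose (m + h + 1) := by
  intro m
  induction m with
  | zero =>
    intro h
    cases h with
    | zero => simp [walks]
    | succ h =>
      have h1 : (2 * 0 + 1).choose (0 + (h + 1) + 2) = 0 := Nat.choose_eq_zero_of_lt (by omega)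
      have h2 : (2 * 0 + 1).choose (0 + (h + 1) + 1) = 0 := Nat.choose_eq_zero_of_lt (by omega)
      rw [h1, h2]
      simp [walks]
  | succ m ih =>
    intro h
    have e1 : 2 * (m + 1) + 1 = (2 * m + 1) + 2 := by ring
    rw [e1]
    cases h with
    | zero =>
      have c1 := choose_plus2 (2 * m + 1) (m + 1)
      have c2 := choose_plus2 (2 * m + 1) m
      have i0 := ih 0
      have i1 := ih 1
      have isymm : (2 * m + 1).choose m = (2 * m + 1).choose (m + 1) := by
        have h' := Nat.choose_symm (n := 2 * m + 1) (k := m + 1) (by omega)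
        have e : 2 * m + 1 - (m + 1) = m := by omega
        rw [e] at h'
        exact h'
      rw [card_walks_succ_zero]
      ring_nf at c1 c2 i0 i1 isymm ⊢
      linarith [c1, c2, i0, i1, isymm]
    | succ h =>
      have c1 := choose_plus2 (2 * m + 1) (m + h + 2)
      have c2 := choose_plus2 (2 * m + 1) (m + h + 1)
      have i0 := ih h
      have i1 := ih (h + 1)
      have i2 := ih (h + 2)
      rw [card_walks_succ_succ]
      ring_nf at c1 c2 i0 i1 i2 ⊢
      linarith [c1, c2, i0, i1, i2]

lemma sum_card_walks (m : ℕ) : ∀ K : ℕ,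
    (∑ h ∈ Finset.range K, (walks m h).card) + (2 * m + 1).choose (m + K + 1)
      = (2 * m + 1).choose (m + 1) := by
  intro K
  induction K with
  | zero => simp
  | succ K ih =>
    rw [Finset.sum_range_succ]
    have := card_walks_eq m K
    rw [show m + (K + 1) + 1 = m + K + 2 from by ring]
    linarith [this, ih]

def totalWalks (m : ℕ) : Finset (List Step) := (Finset.range (m + 1)).biUnion (walks m)

lemma mem_totalWalks (m : ℕ) (w : List Step) :
    w ∈ totalWalks m ↔ (w.length = m ∧ Ok w) := by
  simp only [totalWalks, Finset.mem_biUnion, Finset.mem_range]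
  constructor
  · rintro ⟨h, -, hw⟩
    obtain ⟨hl, -, hok⟩ := (mem_walks m h w).mp hw
    exact ⟨hl, hok⟩
  · rintro ⟨hl, hok⟩
    have hBA := ok_head hok
    refine ⟨cA w - cB w, ?_, (mem_walks m _ w).mpr ⟨hl, by omega, hok⟩⟩
    have : cA w ≤ w.length := List.countP_le_length
    omega

lemma card_totalWalks (m : ℕ) : (totalWalks m).card = (2 * m + 1).choose (m + 1) := by
  rw [totalWalks, Finset.card_biUnion]
  · have hz : (2 * m + 1).choose (m + (m + 1) + 1) = 0 :=
      Nat.choose_eq_zero_of_lt (by omega)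
    have := sum_card_walks m (m + 1)
    omega
  · intro x hx y hy hxy
    rw [Function.onFun, Finset.disjoint_left]
    intro w hw hw'
    obtain ⟨-, hc1, -⟩ := (mem_walks m x w).mp hw
    obtain ⟨-, hc2, -⟩ := (mem_walks m y w).mp hw'
    exact hxy (by omega)

/-- the list of `i`-positions -/
def pA (w : List Step) : List ℕ := pos (fun c => c.1) 1 w
/-- the list of positive `j`-positions -/
def pB (w : List Step) : List ℕ := pos (fun c => c.2) 1 w
/-- the full `j`-list -/
def jlist (w : List Step) : List ℕ := List.replicate (cA w - cB w) 0 ++ pB w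

def Phi (w : List Step) : List (ℕ × ℕ) := (pA w).zip (jlist w)

def Psi (m : ℕ) (l : List (ℕ × ℕ)) : List Step :=
  (List.range m).map (fun k =>
    (decide ((k + 1) ∈ l.map Prod.fst),
     decide ((k + 1) ∈ (l.map Prod.snd).filter (fun j => decide (0 < j)))))

lemma length_pA (w : List Step) : (pA w).length = cA w := length_pos _ w 1
lemma length_pB (w : List Step) : (pB w).length = cB w := length_pos _ w 1

lemma length_jlist {w : List Step} (hok : Ok w) : (jlist w).length = cA w := by
  have := ok_head hok
  simp [jlist, length_pB]; omega

lemma length_Phi {w : List Step} (hok : Ok w) : (Phi w).length = cA w := by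
  simp [Phi, length_pA, length_jlist hok]

lemma pairwise_pA_le (w : List Step) : (pA w).Pairwise (· ≤ ·) :=
  (pairwise_pos _ w 1).imp le_of_lt
lemma pairwise_pB_le (w : List Step) : (pB w).Pairwise (· ≤ ·) :=
  (pairwise_pos _ w 1).imp le_of_lt

lemma countP_pA (w : List Step) (b : ℕ) (hb : 1 ≤ b) :
    (pA w).countP (fun a => decide (b ≤ a)) = cA (w.drop (b - 1)) := by
  have e : 1 + (b - 1) = b := by omega
  have := countP_pos (fun c => c.1) w 1 (b - 1)
  simp only [e] at this
  exact this

lemma countP_pB (w : List Step) (b : ℕ) (hb : 1 ≤ b) :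
    (pB w).countP (fun a => decide (b ≤ a)) = cB (w.drop (b - 1)) := by
  have e : 1 + (b - 1) = b := by omega
  have := countP_pos (fun c => c.2) w 1 (b - 1)
  simp only [e] at this
  exact this

/-- the key domination property -/
lemma phi_snd_le_fst {w : List Step} (hok : Ok w) {k : ℕ} (hkA : k < (pA w).length)
    (hkJ : k < (jlist w).length) : (jlist w)[k] ≤ (pA w)[k] := by
  have hBA := ok_head hok
  set t := cA w - cB w with ht
  rcases Nat.lt_or_ge k t with hkt | hkt
  · -- zero part
    have h1 : k < (List.replicate t 0).length := by simp [hkt]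
    have : (jlist w)[k] = (List.replicate t 0)[k] := List.getElem_append_left h1
    rw [this, List.getElem_replicate]
    exact Nat.zero_le _
  · -- positive part
    have hlrep : (List.replicate t (0:ℕ)).length = t := List.length_replicate
    have h2 : (List.replicate t (0:ℕ)).length ≤ k := by rw [hlrep]; exact hkt
    have hr : k - t < (pB w).length := by
      have := hkJ; simp [jlist, hlrep] at this; omega
    have hjk : (jlist w)[k] = (pB w)[k - t] := by
      have := List.getElem_append_right (as := List.replicate t (0:ℕ)) (bs := pB w)
        (i := k) h2 (h₂ := by simpa [jlist] using hkJ)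
      simpa [jlist, hlrep] using this
    rw [hjk]
    set b := (pB w)[k - t] with hbdef
    have hbmem : b ∈ pB w := List.getElem_mem _
    have hb1 : 1 ≤ b := (mem_pos_bounds hbmem).1
    have L1 := countP_ge_of_sorted (pairwise_pB_le w) hr
    rw [← hbdef] at L1
    rw [countP_pB w b hb1] at L1
    have hOk := hok (b - 1)
    have hA : (pA w).countP (fun a => decide (b ≤ a)) = cA (w.drop (b - 1)) :=
      countP_pA w b hb1
    have hge : (pA w).length - k ≤ (pA w).countP (fun a => decide (b ≤ a)) := by
      rw [hA]
      have h3 : (pB w).length = cB w := length_pB w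
      have h4 : (pA w).length = cA w := length_pA w
      omega
    exact le_getElem_of_countP (pairwise_pA_le w) hkA hge

lemma map_fst_Phi {w : List Step} (hok : Ok w) : (Phi w).map Prod.fst = pA w :=
  List.map_fst_zip (by rw [length_pA, length_jlist hok])
lemma map_snd_Phi {w : List Step} (hok : Ok w) : (Phi w).map Prod.snd = jlist w :=
  List.map_snd_zip (by rw [length_pA, length_jlist hok])

lemma phi_conditions {w : List Step} (hok : Ok w) :
    (Phi w).length ≤ w.length ∧
    (Phi w).Chain' (fun p q => p.1 < q.1) ∧
    (Phi w).Chain' (fun p q => p.2 ≤ q.2) ∧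
    (Phi w).Chain' (fun p q => 1 ≤ p.2 → p.2 < q.2) ∧
    ∀ p ∈ Phi w, 1 ≤ p.1 ∧ p.2 ≤ p.1 ∧ p.1 ≤ w.length := by
  have hBA := ok_head hok
  refine ⟨?_, ?_, ?_, ?_, ?_⟩
  · rw [length_Phi hok]
    exact List.countP_le_length
  · rw [List.Chain', ← List.isChain_map Prod.fst, map_fst_Phi hok]
    exact ((pairwise_pos _ w 1).isChain : (pA w).Chain' (· < ·))
  · rw [List.Chain', ← List.isChain_map Prod.snd, map_snd_Phi hok]
    rw [jlist, List.isChain_append]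
    refine ⟨(List.pairwise_replicate.mpr (Or.inr le_rfl)).isChain, (pairwise_pB_le w).isChain, ?_⟩
    intro x hx y hy
    have hx' : x ∈ List.replicate (cA w - cB w) (0:ℕ) := List.mem_of_mem_getLast? hx
    rw [List.eq_of_mem_replicate hx']
    exact Nat.zero_le _
  · refine (List.isChain_map (R := fun x y => 1 ≤ x → x < y) Prod.snd).mp ?_
    rw [map_snd_Phi hok]
    rw [jlist, List.isChain_append]
    refine ⟨(List.pairwise_replicate.mpr (Or.inr (fun h => absurd h (by omega)))).isChain,
      (((pairwise_pos (fun c => c.2) w 1).imp (fun {a b} h => fun _ => h) :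
        (pB w).Pairwise (fun x y => 1 ≤ x → x < y))).isChain, ?_⟩
    intro x hx y hy
    have hx' : x ∈ List.replicate (cA w - cB w) (0:ℕ) := List.mem_of_mem_getLast? hx
    rw [List.eq_of_mem_replicate hx']
    intro h; exact absurd h (by omega)
  · intro pr hpr
    rw [List.mem_iff_getElem] at hpr
    obtain ⟨k, hk, rfl⟩ := hpr
    have hkA : k < (pA w).length := by
      rw [length_pA]; rw [length_Phi hok] at hk; exact hk
    have hkJ : k < (jlist w).length := by
      rw [length_jlist hok]; rw [length_Phi hok] at hk; exact hk
    have hget : (Phi w)[k] = ((pA w)[k], (jlist w)[k]) := List.getElem_zip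
    rw [hget]
    have hmemA : (pA w)[k] ∈ pA w := List.getElem_mem _
    have hbd := mem_pos_bounds hmemA
    exact ⟨hbd.1, phi_snd_le_fst hok hkA hkJ, by omega⟩

section PsiLemmas

variable {m : ℕ} {l : List (ℕ × ℕ)}
  (h1 : l.Chain' (fun p q => p.1 < q.1))
  (h2 : l.Chain' (fun p q => p.2 ≤ q.2))
  (h3 : l.Chain' (fun p q => 1 ≤ p.2 → p.2 < q.2))
  (h5 : ∀ p ∈ l, 1 ≤ p.1 ∧ p.2 ≤ p.1 ∧ p.1 ≤ m)

lemma length_Psi : (Psi m l).length = m := by simp [Psi]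

lemma getElem_Psi {k : ℕ} (hk : k < m) :
    (Psi m l)[k]'(by rw [length_Psi]; exact hk) =
      (decide ((k + 1) ∈ l.map Prod.fst),
       decide ((k + 1) ∈ (l.map Prod.snd).filter (fun j => decide (0 < j)))) := by
  simp [Psi]

include h1 in
lemma pwA : (l.map Prod.fst).Pairwise (· < ·) := by
  have := (List.isChain_map (R := (· < ·)) Prod.fst (l := l)).mpr h1
  exact List.isChain_iff_pairwise.mp this

include h2 in
lemma pwJ : (l.map Prod.snd).Pairwise (· ≤ ·) := by
  have := (List.isChain_map (R := (· ≤ ·)) Prod.snd (l := l)).mpr h2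
  exact List.isChain_iff_pairwise.mp this

include h2 h3 in
lemma pwR : (l.map Prod.snd).Pairwise (fun a b => a ≤ b ∧ (1 ≤ a → a < b)) := by
  have c2 := (List.isChain_map (R := (· ≤ ·)) Prod.snd (l := l)).mpr h2
  have c3 := (List.isChain_map (R := fun x y => 1 ≤ x → x < y) Prod.snd (l := l)).mpr h3
  have c := chain'_and c2 c3
  haveI : IsTrans ℕ (fun a b => a ≤ b ∧ (1 ≤ a → a < b)) :=
    ⟨fun a b c hab hbc => ⟨le_trans hab.1 hbc.1,
      fun ha => lt_of_lt_of_le (hab.2 ha) hbc.1⟩⟩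
  exact List.isChain_iff_pairwise.mp c

include h2 h3 in
lemma pwB : ((l.map Prod.snd).filter (fun j => decide (0 < j))).Pairwise (· < ·) := by
  refine ((pwR h2 h3).filter _).imp_of_mem ?_
  intro a b ha hb hab
  rw [List.mem_filter] at ha
  have : 0 < a := by simpa using ha.2
  exact hab.2 this

include h5 in
lemma memA_bounds {a : ℕ} (ha : a ∈ l.map Prod.fst) : 1 ≤ a ∧ a ≤ m := by
  rw [List.mem_map] at ha
  obtain ⟨pr, hpr, rfl⟩ := ha
  exact ⟨(h5 pr hpr).1, (h5 pr hpr).2.2⟩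

include h5 in
lemma memB_bounds {b : ℕ} (hb : b ∈ (l.map Prod.snd).filter (fun j => decide (0 < j))) :
    1 ≤ b ∧ b ≤ m := by
  rw [List.mem_filter] at hb
  obtain ⟨hb1, hb2⟩ := hb
  rw [List.mem_map] at hb1
  obtain ⟨pr, hpr, rfl⟩ := hb1
  have := h5 pr hpr
  constructor
  · simp at hb2; omega
  · omega

lemma nat_lt_antisymm : IsAntisymm ℕ (· < ·) :=
  ⟨fun a b h1 h2 => absurd h2 (not_lt.mpr (le_of_lt h1))⟩

include h1 h5 in
lemma posA_Psi : pos (fun c => c.1) 1 (Psi m l) = l.map Prod.fst := by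
  haveI := nat_lt_antisymm
  have hpw1 := pairwise_pos (fun c => c.1) (Psi m l) 1
  have hpw2 := pwA h1
  apply List.Perm.eq_of_pairwise' hpw1 hpw2
  rw [List.perm_ext_iff_of_nodup (hpw1.imp ne_of_lt) (hpw2.imp ne_of_lt)]
  intro a
  rw [mem_pos]
  constructor
  · rintro ⟨k, hk, rfl, hp⟩
    rw [length_Psi] at hk
    rw [getElem_Psi hk] at hp
    simp only [decide_eq_true_eq] at hp
    simpa [Nat.add_comm] using hp
  · intro ha
    have hb := memA_bounds h5 ha
    refine ⟨a - 1, by rw [length_Psi]; omega, by omega, ?_⟩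
    have hk : a - 1 < m := by omega
    rw [getElem_Psi hk]
    simp only [decide_eq_true_eq]
    have : a - 1 + 1 = a := by omega
    rw [this]
    exact ha

include h2 h3 h5 in
lemma posB_Psi : pos (fun c => c.2) 1 (Psi m l) =
    (l.map Prod.snd).filter (fun j => decide (0 < j)) := by
  haveI := nat_lt_antisymm
  have hpw1 := pairwise_pos (fun c => c.2) (Psi m l) 1
  have hpw2 := pwB h2 h3
  apply List.Perm.eq_of_pairwise' hpw1 hpw2
  rw [List.perm_ext_iff_of_nodup (hpw1.imp ne_of_lt) (hpw2.imp ne_of_lt)]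
  intro a
  rw [mem_pos]
  constructor
  · rintro ⟨k, hk, rfl, hp⟩
    rw [length_Psi] at hk
    rw [getElem_Psi hk] at hp
    simp only [decide_eq_true_eq] at hp
    simpa [Nat.add_comm] using hp
  · intro ha
    have hb := memB_bounds h5 ha
    refine ⟨a - 1, by rw [length_Psi]; omega, by omega, ?_⟩
    have hk : a - 1 < m := by omega
    rw [getElem_Psi hk]
    simp only [decide_eq_true_eq]
    have : a - 1 + 1 = a := by omega
    rw [this]
    exact ha

include h1 h5 in
lemma cA_Psi : cA (Psi m l) = l.length := by
  have := length_pos (fun c => c.1) (Psi m l) 1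
  rw [posA_Psi h1 h5] at this
  simp only [List.length_map] at this
  exact this.symm

include h2 h3 h5 in
lemma cB_Psi : cB (Psi m l) =
    ((l.map Prod.snd).filter (fun j => decide (0 < j))).length := by
  have := length_pos (fun c => c.2) (Psi m l) 1
  rw [posB_Psi h2 h3 h5] at this
  exact this.symm

include h1 h2 h3 h5 in
lemma ok_Psi : Ok (Psi m l) := by
  intro k
  have eB := countP_pos (fun c => c.2) (Psi m l) 1 k
  have eA := countP_pos (fun c => c.1) (Psi m l) 1 k
  rw [posB_Psi h2 h3 h5] at eB
  rw [posA_Psi h1 h5] at eA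
  show ((Psi m l).drop k).countP (fun c => c.2) ≤ ((Psi m l).drop k).countP (fun c => c.1)
  rw [← eB, ← eA]
  have e1 : ((l.map Prod.snd).filter (fun j => decide (0 < j))).countP
        (fun a => decide (1 + k ≤ a))
      = (l.map Prod.snd).countP (fun a => decide (1 + k ≤ a)) := by
    rw [List.countP_filter]
    apply List.countP_congr
    intro a ha
    simp only [Bool.and_eq_true, decide_eq_true_eq]
    omega
  rw [e1, List.countP_map, List.countP_map]
  apply List.countP_mono_left
  intro pr hpr
  simp only [Function.comp_apply, decide_eq_true_eq]
  have := (h5 pr hpr).2.1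
  omega

include h1 h2 h3 h5 in
lemma phi_Psi : Phi (Psi m l) = l := by
  have hok := ok_Psi h1 h2 h3 h5
  have hsplit := sorted_split (l.map Prod.snd) (pwJ h2)
  set B := (l.map Prod.snd).filter (fun j => decide (0 < j)) with hB
  set z := (l.map Prod.snd).countP (fun j => decide (j = 0)) with hz
  have hlen : l.length = z + B.length := by
    have := congrArg List.length hsplit
    simpa using this
  have ht : cA (Psi m l) - cB (Psi m l) = z := by
    rw [cA_Psi h1 h5, cB_Psi h2 h3 h5, ← hB]
    omega
  show (pA (Psi m l)).zip (jlist (Psi m l)) = l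
  rw [jlist, ht]
  rw [pA, posA_Psi h1 h5, pB, posB_Psi h2 h3 h5, ← hB, ← hsplit]
  exact zip_fst_snd l

end PsiLemmas

lemma filter_jlist (w : List Step) :
    (jlist w).filter (fun j => decide (0 < j)) = pB w := by
  rw [jlist, List.filter_append]
  have h1 : (List.replicate (cA w - cB w) (0:ℕ)).filter (fun j => decide (0 < j)) = [] := by
    rw [List.filter_eq_nil_iff]
    intro a ha
    rw [List.eq_of_mem_replicate ha]
    simp
  have h2 : (pB w).filter (fun j => decide (0 < j)) = pB w := by
    rw [List.filter_eq_self]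
    intro b hb
    have := (mem_pos_bounds hb).1
    simp; omega
  rw [h1, h2, List.nil_append]

lemma psi_Phi {w : List Step} (hok : Ok w) : Psi w.length (Phi w) = w := by
  apply List.ext_getElem
  · rw [length_Psi]
  · intro k hk1 hk2
    rw [length_Psi] at hk1
    rw [getElem_Psi hk1, map_fst_Phi hok, map_snd_Phi hok, filter_jlist]
    have hiffA : (k + 1 ∈ pA w) ↔ (w[k].1 = true) := by
      rw [pA, mem_pos]
      constructor
      · rintro ⟨k', hk', he, hp⟩
        have : k' = k := by omega
        subst this
        exact hp
      · intro hp
        exact ⟨k, hk2, by omega, hp⟩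
    have hiffB : (k + 1 ∈ pB w) ↔ (w[k].2 = true) := by
      rw [pB, mem_pos]
      constructor
      · rintro ⟨k', hk', he, hp⟩
        have : k' = k := by omega
        subst this
        exact hp
      · intro hp
        exact ⟨k, hk2, by omega, hp⟩
    have e1 : decide (k + 1 ∈ pA w) = w[k].1 := by
      cases hb : w[k].1
      · simp [hiffA, hb]
      · simp [hiffA, hb]
    have e2 : decide (k + 1 ∈ pB w) = w[k].2 := by
      cases hb : w[k].2
      · simp [hiffB, hb]
      · simp [hiffB, hb]
    rw [e1, e2]


end TLB

open TLB in
/-- The number of tuples `(p, (i₁,…,i_p), (j₁,…,j_p))`, encoded as lists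
`[(i₁,j₁), …, (i_p,j_p)]`, with `0 ≤ p ≤ n-1`, `1 ≤ i₁ < ⋯ < i_p ≤ n-1`,
`0 ≤ j₁ ≤ ⋯ ≤ j_p ≤ n-1`, `j_k ≤ i_k` for all `k`, and `j_k > 0 → j_k < j_{k+1}`
for `k < p`, equals `((n+1)/2) * C_n = (1/2) * choose (2n) n`. -/
theorem count_typeB_M0plus (n : ℕ) (hn : 2 ≤ n) :
    2 * ({l : List (ℕ × ℕ) | l.length ≤ n - 1 ∧
        l.Chain' (fun p q => p.1 < q.1) ∧
        l.Chain' (fun p q => p.2 ≤ q.2) ∧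
        l.Chain' (fun p q => 1 ≤ p.2 → p.2 < q.2) ∧
        ∀ p ∈ l, 1 ≤ p.1 ∧ p.2 ≤ p.1 ∧ p.1 ≤ n - 1}).ncard = (2 * n).choose n := by
  obtain ⟨m, rfl⟩ : ∃ m, n = m + 1 := ⟨n - 1, by omega⟩
  simp only [Nat.add_sub_cancel]
  have hset : {l : List (ℕ × ℕ) | l.length ≤ m ∧
        l.Chain' (fun p q => p.1 < q.1) ∧
        l.Chain' (fun p q => p.2 ≤ q.2) ∧
        l.Chain' (fun p q => 1 ≤ p.2 → p.2 < q.2) ∧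
        ∀ p ∈ l, 1 ≤ p.1 ∧ p.2 ≤ p.1 ∧ p.1 ≤ m}
      = Phi '' ↑(totalWalks m) := by
    ext l
    simp only [Set.mem_setOf_eq, Set.mem_image, Finset.mem_coe]
    constructor
    · rintro ⟨hlen, hc1, hc2, hc3, hc5⟩
      refine ⟨Psi m l, ?_, phi_Psi hc1 hc2 hc3 hc5⟩
      rw [mem_totalWalks]
      exact ⟨length_Psi, ok_Psi hc1 hc2 hc3 hc5⟩
    · rintro ⟨w, hw, rfl⟩
      rw [mem_totalWalks] at hw
      obtain ⟨hlw, hok⟩ := hw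
      have h := phi_conditions hok
      rw [hlw] at h
      exact h
  rw [hset]
  rw [Set.ncard_image_of_injOn, Set.ncard_coe_finset, card_totalWalks]
  · have h1 : 2 * (m + 1) = (2 * m + 1) + 1 := by ring
    rw [h1, Nat.choose_succ_succ (2 * m + 1) m]
    have isymm : (2 * m + 1).choose m = (2 * m + 1).choose (m + 1) := by
      have h' := Nat.choose_symm (n := 2 * m + 1) (k := m + 1) (by omega)
      have e : 2 * m + 1 - (m + 1) = m := by omega
      rw [e] at h'
      exact h'
    simp only [Nat.succ_eq_add_one]
    omega
  · intro w1 hw1 w2 hw2 heq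
    rw [Finset.mem_coe, mem_totalWalks] at hw1 hw2
    calc w1 = Psi w1.length (Phi w1) := (psi_Phi hw1.2).symm
    _ = Psi w2.length (Phi w2) := by rw [hw1.1, hw2.1, heq]
    _ = w2 := psi_Phi hw2.2
end

section
/- For every integer n ≥ 4, the number of tuples (p, (i_1,…,i_p), (j_1,…,j_p)) of integers with 1 ≤ p ≤ n-1, 1 ≤ i_1 < i_2 < ⋯ < i_p ≤ n-1, 0 ≤ j_k ≤ i_k for all k, and such that for each 1 ≤ k < p: j_k = 0 implies j_{k+1} ≥ 1; j_k = 1 implies j_{k+1} = 0 or j_{k+1} ≥ 2; and j_k > 1 implies j_k < j_{k+1}, equals ((n+1)/2)·C_n − 1 = (1/2)·binom(2n, n) − 1, where C_n is the n-th Catalan number. Equivalently, twice (this number plus 1) equals binom(2n, n). -/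
/-!
Read a tuple as a word of letters `(i, j)` and scan the positions `i` in increasing order.
Let `w(t, a, s)` be the number of words whose positions lie in the window `[a, a + t)` and
whose first `j` may follow `s`, the `j` of the letter before the window (`none` if there is
none). Either position `a` is unused, or the word starts with a letter `(a, j)`; this gives a
linear recursion in `t`. By induction on `t`, the states `j = 0` and `j = 1` have equal
counts: they differ only in whether `1` or `0` may come next, and those continuations are
counted equally. With `d = a - j`, a state `j ≥ 2` gives the ballot number
`C(2t+d-1, t) - C(2t+d-1, t+d+1)`, the state `1` gives `C(a+2t-1, t)` and the start state
gives `C(a+2t, t)`. For `a = 1`, `t = n - 1` this last count includes the empty word and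
equals `C(2n-1, n-1) = C(2n, n) / 2`.
-/

open Finset

theorem Nat.choose_two_mul_succ_eq_two_mul_choose (m : ℕ) :
    (2 * (m + 1)).choose (m + 1) = 2 * (2 * m + 1).choose m := by
  rw [show 2 * (m + 1) = 2 * m + 1 + 1 by ring, Nat.choose_succ_succ', Nat.choose_symm_half,
    ← two_mul]

theorem Finset.sum_Ioc_eq_add_sum_Ioc_succ {M : Type*} [AddCommMonoid M] (f : ℕ → M) {j a : ℕ}
    (h : j < a) : ∑ k ∈ Ioc j a, f k = f (j + 1) + ∑ k ∈ Ioc (j + 1) a, f k := by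
  rw [← insert_Ioc_add_one_left_eq_Ioc h, sum_insert left_notMem_Ioc]

theorem List.Nodup.length_le_card_of_forall_mem {α : Type*} {l : List α} {s : Finset α}
    (hl : l.Nodup) (h : ∀ x ∈ l, x ∈ s) : l.length ≤ #s := by
  classical
  rw [← List.toFinset_card_of_nodup hl]
  exact card_le_card fun x hx => h x (List.mem_toFinset.1 hx)

namespace TypeDWords

def CanFollow (j k : ℕ) : Prop :=
  (j = 0 → 1 ≤ k) ∧ (j = 1 → k = 0 ∨ 2 ≤ k) ∧ (1 < j → j < k)

instance : DecidableRel CanFollow := fun _ _ => by unfold CanFollow; infer_instance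

def Follows (s : Option ℕ) (k : ℕ) : Prop := ∀ j ∈ s, CanFollow j k

instance (s : Option ℕ) : DecidablePred (Follows s) := fun _ => by unfold Follows; infer_instance

def IsWord (t a : ℕ) (s : Option ℕ) (l : List (ℕ × ℕ)) : Prop :=
  l.Pairwise (fun p q => p.1 < q.1) ∧ l.IsChain (fun p q => CanFollow p.2 q.2) ∧
    (∀ p ∈ l, a ≤ p.1 ∧ p.1 < a + t ∧ p.2 ≤ p.1) ∧ ∀ p ∈ l.head?, Follows s p.2

def words : ℕ → ℕ → Option ℕ → Finset (List (ℕ × ℕ))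
  | 0, _, _ => {[]}
  | t + 1, a, s => words t (a + 1) s ∪
      ((range (a + 1)).filter (Follows s)).biUnion fun j =>
        (words t (a + 1) (some j)).map ⟨List.cons (a, j), List.cons_injective⟩

section Membership

variable {t a : ℕ} {s : Option ℕ} {l : List (ℕ × ℕ)}

theorem isWord_nil (t a : ℕ) (s : Option ℕ) : IsWord t a s [] := by
  simp [IsWord]

theorem isWord_zero_iff : IsWord 0 a s l ↔ l = [] := by
  refine ⟨fun h => List.eq_nil_iff_forall_not_mem.mpr fun p hp => ?_,
    fun h => h ▸ isWord_nil 0 a s⟩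
  have := h.2.2.1 p hp
  omega

theorem isWord_cons_iff {j : ℕ} :
    IsWord (t + 1) a s ((a, j) :: l) ↔
      j ≤ a ∧ Follows s j ∧ IsWord t (a + 1) (some j) l := by
  simp only [IsWord, List.pairwise_cons, List.isChain_cons, List.forall_mem_cons, List.head?_cons,
    Option.mem_def, Option.some.injEq, forall_eq', Follows]
  constructor
  · rintro ⟨⟨hlt, hpw⟩, ⟨hc, hch⟩, ⟨⟨-, -, hj⟩, hb⟩, hs⟩
    refine ⟨hj, hs, hpw, hch, fun p hp => ?_, fun p hp => hc p hp⟩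
    have := hb p hp; have := hlt p hp; omega
  · rintro ⟨hj, hs, hpw, hch, hb, hc⟩
    refine ⟨⟨fun p hp => (hb p hp).1, hpw⟩, ⟨hc, hch⟩,
      ⟨⟨le_rfl, by omega, hj⟩, fun p hp => ?_⟩, hs⟩
    have := hb p hp; omega

theorem isWord_succ_iff_of_forall_ne (h : ∀ p ∈ l, p.1 ≠ a) :
    IsWord (t + 1) a s l ↔ IsWord t (a + 1) s l := by
  refine and_congr_right' (and_congr_right' (and_congr_left' (forall₂_congr fun p hp => ?_)))
  have := h p hp
  omega

theorem isWord_succ_iff :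
    IsWord (t + 1) a s l ↔ IsWord t (a + 1) s l ∨
      ∃ j ≤ a, Follows s j ∧ ∃ tl, IsWord t (a + 1) (some j) tl ∧ (a, j) :: tl = l := by
  constructor
  · intro h
    rcases l with _ | ⟨⟨i, j⟩, tl⟩
    · exact .inl (isWord_nil _ _ _)
    obtain rfl | hi := eq_or_ne i a
    · obtain ⟨hj, hs, htl⟩ := isWord_cons_iff.mp h
      exact .inr ⟨j, hj, hs, tl, htl, rfl⟩
    refine .inl ((isWord_succ_iff_of_forall_ne fun p hp => ?_).mp h)
    obtain ⟨hpw, -, hb, -⟩ := h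
    have hai := (hb _ List.mem_cons_self).1
    rcases List.mem_cons.mp hp with rfl | hp
    · exact hi
    · have := List.rel_of_pairwise_cons hpw hp
      dsimp only at this
      omega
  · rintro (h | ⟨j, hj, hs, tl, htl, rfl⟩)
    · exact (isWord_succ_iff_of_forall_ne fun p hp => by have := (h.2.2.1 p hp).1; omega).mpr h
    · exact isWord_cons_iff.mpr ⟨hj, hs, htl⟩

theorem mem_words : l ∈ words t a s ↔ IsWord t a s l := by
  induction t generalizing a s l with
  | zero => simp [words, isWord_zero_iff]
  | succ t ih =>
    simp only [words, mem_union, mem_biUnion, mem_filter, mem_range, mem_map,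
      Function.Embedding.coeFn_mk, ih, isWord_succ_iff, Nat.lt_succ_iff, and_assoc]

end Membership

theorem card_words_zero (a : ℕ) (s : Option ℕ) : #(words 0 a s) = 1 := rfl

theorem card_words_succ (t a : ℕ) (s : Option ℕ) :
    #(words (t + 1) a s) = #(words t (a + 1) s) +
      ∑ j ∈ (range (a + 1)).filter (Follows s), #(words t (a + 1) (some j)) := by
  rw [words, card_union_of_disjoint, card_biUnion]
  · simp only [card_map]
  · intro j _ k _ hjk
    simp only [Function.onFun, disjoint_left, mem_map, Function.Embedding.coeFn_mk]
    rintro _ ⟨l, -, rfl⟩ ⟨l', -, h⟩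
    exact hjk (congrArg Prod.snd (List.cons.inj h).1).symm
  · simp only [disjoint_left, mem_biUnion, mem_map, Function.Embedding.coeFn_mk, mem_words]
    rintro _ h ⟨j, -, l, -, rfl⟩
    have := (h.2.2.1 _ List.mem_cons_self).1
    omega

theorem filter_follows_none (a : ℕ) :
    (range (a + 1)).filter (Follows none) = insert 0 (Ioc 0 a) := by
  ext k; simp [Follows]

theorem filter_follows_some_zero (a : ℕ) :
    (range (a + 1)).filter (Follows (some 0)) = Ioc 0 a := by
  ext k; simp [Follows, CanFollow]; omega

theorem filter_follows_some_one (a : ℕ) :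
    (range (a + 1)).filter (Follows (some 1)) = insert 0 (Ioc 1 a) := by
  ext k; simp [Follows, CanFollow]; omega

theorem filter_follows_some_of_two_le {j : ℕ} (hj : 2 ≤ j) (a : ℕ) :
    (range (a + 1)).filter (Follows (some j)) = Ioc j a := by
  ext k; simp [Follows, CanFollow]; omega

theorem card_words_succ_none (t a : ℕ) :
    #(words (t + 1) a none) = #(words t (a + 1) none) + #(words (t + 1) a (some 0)) := by
  rw [card_words_succ, card_words_succ, filter_follows_none, filter_follows_some_zero,
    sum_insert left_notMem_Ioc]

theorem card_words_some_zero_eq_some_one (t : ℕ) {a : ℕ} (ha : 1 ≤ a) :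
    #(words t a (some 0)) = #(words t a (some 1)) := by
  induction t generalizing a with
  | zero => rfl
  | succ t ih =>
    rw [card_words_succ, card_words_succ, filter_follows_some_zero, filter_follows_some_one,
      sum_insert (by simp), sum_Ioc_eq_add_sum_Ioc_succ _ ha, ih (by omega)]

theorem card_words_succ_some_one (t : ℕ) {a : ℕ} (ha : 2 ≤ a) :
    #(words (t + 1) a (some 1)) = #(words t (a + 1) (some 1)) + #(words t (a + 1) (some 0)) +
      #(words (t + 1) a (some 2)) := by
  rw [card_words_succ, card_words_succ, filter_follows_some_one,
    filter_follows_some_of_two_le le_rfl, sum_insert (by simp), sum_Ioc_eq_add_sum_Ioc_succ _ ha]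
  ring

theorem card_words_succ_some_of_lt (t : ℕ) {j a : ℕ} (hj : 2 ≤ j) (hja : j < a) :
    #(words (t + 1) a (some j)) =
      #(words t (a + 1) (some j)) + #(words (t + 1) a (some (j + 1))) := by
  rw [card_words_succ, card_words_succ, filter_follows_some_of_two_le hj,
    filter_follows_some_of_two_le (by omega), sum_Ioc_eq_add_sum_Ioc_succ _ hja]

theorem card_words_succ_some_of_le (t : ℕ) {j a : ℕ} (hj : 2 ≤ j) (haj : a ≤ j) :
    #(words (t + 1) a (some j)) = #(words t (a + 1) (some j)) := by
  rw [card_words_succ, filter_follows_some_of_two_le hj, Ioc_eq_empty (by omega), sum_empty,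
    add_zero]

-- The ballot number `C(2t+d-1, t) - C(2t+d-1, t+d+1)`, with the subtraction moved to the left.
theorem card_words_some_of_two_le (t d : ℕ) {j : ℕ} (hj : 2 ≤ j) :
    #(words t (j + d) (some j)) + (2 * t + d - 1).choose (t + d + 1) =
      (2 * t + d - 1).choose t := by
  induction t generalizing d j with
  | zero => simp [card_words_zero, Nat.choose_eq_zero_of_lt]
  | succ t ih =>
    induction d generalizing j with
    | zero =>
      have h : #(words t (j + 1) (some j)) + (2 * t).choose (t + 1 + 1) = (2 * t).choose t := by
        convert ih 1 hj using 3 <;> omega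
      rw [add_zero, card_words_succ_some_of_le t hj le_rfl]
      convert_to _ + (2 * t + 1).choose (t + 2) = (2 * t + 1).choose (t + 1) using 3 <;> try omega
      rw [Nat.choose_succ_succ' _ (t + 1), Nat.choose_succ_succ' _ t]
      omega
    | succ d ihd =>
      have h₁ : #(words t (j + 1 + d + 1) (some j)) + (2 * t + d + 1).choose (t + d + 2 + 1) =
          (2 * t + d + 1).choose t := by
        convert ih (d + 2) hj using 4 <;> omega
      have h₂ : #(words (t + 1) (j + 1 + d) (some (j + 1))) + (2 * t + d + 1).choose (t + d + 2) =
          (2 * t + d + 1).choose (t + 1) := by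
        convert ihd (Nat.le_succ_of_le hj) using 3 <;> omega
      rw [card_words_succ_some_of_lt t hj (by omega), show j + (d + 1) = j + 1 + d by omega]
      convert_to _ + (2 * t + d + 2).choose (t + d + 3) = (2 * t + d + 2).choose (t + 1) using 3
        <;> try omega
      rw [Nat.choose_succ_succ' _ (t + d + 2), Nat.choose_succ_succ' _ t]
      omega

theorem card_words_some_one (t a : ℕ) : #(words t (a + 1) (some 1)) = (a + 2 * t).choose t := by
  induction t generalizing a with
  | zero => exact (Nat.choose_zero_right _).symm
  | succ t ih =>
    have h₁ := ih (a + 1)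
    have h₀ := card_words_some_zero_eq_some_one t (a := a + 1 + 1) (by omega)
    rcases a with _ | b
    · rw [card_words_succ, filter_follows_some_one, Ioc_self, insert_empty, sum_singleton,
        h₀, h₁, ← two_mul, zero_add, zero_add, add_comm 1,
        Nat.choose_two_mul_succ_eq_two_mul_choose]
    · have h₂ := card_words_some_of_two_le (t + 1) b (le_refl 2)
      rw [show 2 * (t + 1) + b - 1 = b + 2 * t + 1 by omega] at h₂
      have p₁ := Nat.choose_succ_succ' (b + 2 * t + 2) t
      have p₂ := Nat.choose_succ_succ' (b + 2 * t + 1) t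
      have p₃ := Nat.choose_succ_succ' (b + 2 * t + 1) (t + b + 1)
      have s₁ := Nat.choose_symm_of_eq_add (show b + 2 * t + 2 = t + (t + b + 2) by ring)
      have s₂ := Nat.choose_symm_of_eq_add (show b + 2 * t + 1 = (t + b + 1) + t by ring)
      rw [card_words_succ_some_one t (by omega)]
      ring_nf at *
      omega

theorem card_words_none (t a : ℕ) : #(words t (a + 1) none) = (a + 2 * t + 1).choose t := by
  induction t generalizing a with
  | zero => exact (Nat.choose_zero_right _).symm
  | succ t ih =>
    have p := Nat.choose_succ_succ' (a + 2 * t + 2) t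
    rw [card_words_succ_none, ih, card_words_some_zero_eq_some_one _ (by omega),
      card_words_some_one]
    ring_nf at *
    omega

theorem isWord_one_none_iff {m : ℕ} {l : List (ℕ × ℕ)} :
    IsWord m 1 none l ↔ l.length ≤ m ∧ l.IsChain (fun p q => p.1 < q.1) ∧
      l.IsChain (fun p q => CanFollow p.2 q.2) ∧
        ∀ p ∈ l, 1 ≤ p.1 ∧ p.2 ≤ p.1 ∧ p.1 ≤ m := by
  have : Trans (fun p q : ℕ × ℕ => p.1 < q.1) (fun p q : ℕ × ℕ => p.1 < q.1)
      (fun p q : ℕ × ℕ => p.1 < q.1) := ⟨lt_trans⟩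
  simp only [IsWord, List.isChain_iff_pairwise, Follows, Option.mem_def, reduceCtorEq,
    IsEmpty.forall_iff, implies_true, and_true]
  constructor
  · rintro ⟨hpw, hch, hb⟩
    refine ⟨?_, hpw, hch, fun p hp => ?_⟩
    · calc l.length = (l.map Prod.fst).length := (List.length_map _).symm
        _ ≤ #(Icc 1 m) := by
          refine (List.pairwise_map.2 hpw).nodup.length_le_card_of_forall_mem fun x hx => ?_
          obtain ⟨p, hp, rfl⟩ := List.mem_map.1 hx
          have := hb p hp
          exact mem_Icc.2 ⟨this.1, by omega⟩
        _ = m := by simp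
    · have := hb p hp
      omega
  · rintro ⟨-, hpw, hch, hb⟩
    exact ⟨hpw, hch, fun p hp => by have := hb p hp; omega⟩

theorem ncard_setOf_isWord_add_one (m : ℕ) :
    {l | l ≠ [] ∧ IsWord m 1 none l}.ncard + 1 = (2 * m + 1).choose m := by
  have hset : {l | l ≠ [] ∧ IsWord m 1 none l} = ↑((words m 1 none).erase []) := by
    ext l
    simp [mem_words, and_comm]
  rw [hset, Set.ncard_coe_finset, card_erase_add_one (mem_words.2 (isWord_nil m 1 none)),
    card_words_none m 0, zero_add]

end TypeDWords

/-- The number of tuples `(p, (i₁,…,i_p), (j₁,…,j_p))`, encoded as nonempty lists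
`[(i₁,j₁), …, (i_p,j_p)]`, with `1 ≤ p ≤ n-1`, `1 ≤ i₁ < ⋯ < i_p ≤ n-1`,
`0 ≤ j_k ≤ i_k` for all `k`, and for `k < p`: `j_k = 0 → j_{k+1} ≥ 1`,
`j_k = 1 → (j_{k+1} = 0 ∨ j_{k+1} ≥ 2)`, `j_k > 1 → j_k < j_{k+1}`, equals
`((n+1)/2) * C_n - 1 = (1/2) * choose (2n) n - 1`; equivalently, twice (this number
plus 1) equals `choose (2n) n`. -/
theorem count_typeD_M0 (n : ℕ) (hn : 4 ≤ n) :
    2 * (({l : List (ℕ × ℕ) | l ≠ [] ∧ l.length ≤ n - 1 ∧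
        l.Chain' (fun p q => p.1 < q.1) ∧
        l.Chain' (fun p q =>
          (p.2 = 0 → 1 ≤ q.2) ∧ (p.2 = 1 → q.2 = 0 ∨ 2 ≤ q.2) ∧ (1 < p.2 → p.2 < q.2)) ∧
        ∀ p ∈ l, 1 ≤ p.1 ∧ p.2 ≤ p.1 ∧ p.1 ≤ n - 1}).ncard + 1) = (2 * n).choose n := by
  obtain ⟨m, rfl⟩ : ∃ m, n = m + 1 := ⟨n - 1, by omega⟩
  rw [Nat.choose_two_mul_succ_eq_two_mul_choose, Nat.add_sub_cancel,
    ← TypeDWords.ncard_setOf_isWord_add_one m]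
  congr 3
  ext l
  exact and_congr_right fun _ => TypeDWords.isWord_one_none_iff.symm
end
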